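/- Let n ≥ 1, ρ > 0, and let q ∈ C^∞(ℝ × ℝⁿ) be supported in ℝ × B̄(0,ρ) with all derivatives bounded. Let a_j, j = 0, 1, 2, …, be defined by the recursion a_0(t,x,ω) = −(1/2) ∫_{−∞}^0 q(t+τ, x+τω) dτ, a_j(t,x,ω) = −(1/2) ∫_{−∞}^0 [(∂_t² − Δ_x + q) a_{j−1}](t+τ, x+τω, ω) dτ. Then for every j ≥ 0, every t ∈ ℝ, every ω ∈ S^{n−1}, and every x ∈ ℝⁿ: a_j(t,x,ω) = 0 whenever x·ω < −ρ, and also a_j(t,x,ω) = 0 whenever |x − (x·ω)ω| > ρ. -/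

import Mathlib

open MeasureTheory Finset

noncomputable section

abbrev Euc (n : ℕ) := EuclideanSpace ℝ (Fin n)

variable {n : ℕ}

/-- Partial derivative in the `i`-th coordinate direction. -/
def pd {F : Type*} [NormedAddCommGroup F] [NormedSpace ℝ F]
    (i : Fin n) (g : Euc n → F) : Euc n → F :=
  fun x => fderiv ℝ g x (EuclideanSpace.single i 1)

/-- Multi-index partial derivative `D^γ`. -/
def mderiv {F : Type*} [NormedAddCommGroup F] [NormedSpace ℝ F]
    (γ : Fin n → ℕ) (g : Euc n → F) : Euc n → F :=
  ((List.ofFn (fun i : Fin n => (fun h : Euc n → F => (pd i)^[γ i] h))).foldr (· ∘ ·) id) g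

/-- The (finite) set of multi-indices `γ` with `|γ| ≤ m`. -/
def midx (n m : ℕ) : Finset (Fin n → Fin (m + 1)) :=
  Finset.univ.filter (fun γ => ∑ i, (γ i : ℕ) ≤ m)

/-- The `C^m(K)` norm: `∑_{|γ| ≤ m} sup_{x ∈ K} |D^γ g(x)|`. -/
def CnormOn {F : Type*} [NormedAddCommGroup F] [NormedSpace ℝ F]
    (m : ℕ) (K : Set (Euc n)) (g : Euc n → F) : ℝ :=
  ∑ γ ∈ midx n m, ⨆ x ∈ K, ‖mderiv (fun i => (γ i : ℕ)) g x‖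

/-- Parametrization of the hyperplane `ω^⊥` by Euclidean space of the matching dimension,
via an orthonormal basis; this identification is measure preserving. -/
def perpEmb (ω : Euc n) :
    EuclideanSpace ℝ (Fin (Module.finrank ℝ ((Submodule.span ℝ {ω})ᗮ : Submodule ℝ (Euc n)))) →
      Euc n :=
  fun y => ((stdOrthonormalBasis ℝ ((Submodule.span ℝ {ω})ᗮ : Submodule ℝ (Euc n))).repr.symm y :
    Euc n)

/-- The weighted Radon transform `R_μ f(p,ω) = ∫_{ω^⊥} μ(pω + y, ω) f(pω + y) dy`,
the integral over the hyperplane `{x : x·ω = p}` with respect to the `(n-1)`-dimensional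
Lebesgue measure on `ω^⊥`. -/
def Rw (μ : Euc n → Euc n → ℂ) (f : Euc n → ℂ) (p : ℝ) (ω : Euc n) : ℂ :=
  ∫ y, μ (p • ω + perpEmb ω y) ω * f (p • ω + perpEmb ω y)

/-- The `L²(S^{n-1}; H^L(ℝ))` norm of a function `G(p, ω)`. -/
def L2H (L : ℕ) (G : ℝ → Metric.sphere (0 : Euc n) 1 → ℂ) : ℝ :=
  Real.sqrt (∫ ω, (∑ l ∈ Finset.range (L + 1),
    ∫ p : ℝ, ‖iteratedDeriv l (fun p' => G p' ω) p‖ ^ 2)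
      ∂((volume : Measure (Euc n)).toSphere))

/-- The wave operator with potential, `(∂_t² - Δ_x + q)a`, acting on `a(t,x,ω)` in `(t,x)`. -/
def waveOp (q : ℝ → Euc n → ℝ) (a : ℝ → Euc n → Euc n → ℝ) : ℝ → Euc n → Euc n → ℝ :=
  fun t x ω => iteratedDeriv 2 (fun s => a s x ω) t
    - (∑ i, pd i (pd i (fun y => a t y ω)) x) + q t x * a t x ω

/-- The amplitudes `a_j` of the progressive wave expansion:
`a_0(t,x,ω) = -(1/2)∫_{-∞}^0 q(t+τ, x+τω) dτ` and
`a_j(t,x,ω) = -(1/2) ∫_{-∞}^0 [(∂_t² - Δ + q) a_{j-1}](t+τ, x+τω, ω) dτ`. -/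
def aSeq (q : ℝ → Euc n → ℝ) : ℕ → ℝ → Euc n → Euc n → ℝ
  | 0 => fun t x ω => (-(1 : ℝ) / 2) * ∫ τ in Set.Iic (0 : ℝ), q (t + τ) (x + τ • ω)
  | (j + 1) => fun t x ω => (-(1 : ℝ) / 2) *
      ∫ τ in Set.Iic (0 : ℝ), waveOp q (aSeq q j) (t + τ) (x + τ • ω) ω

/-- Time derivative operator on functions of `(t,x)`. -/
def tD (g : ℝ → Euc n → ℝ) : ℝ → Euc n → ℝ := fun t x => deriv (fun s => g s x) t

/-- Spatial partial derivative operator on functions of `(t,x)`. -/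
def xD (i : Fin n) (g : ℝ → Euc n → ℝ) : ℝ → Euc n → ℝ :=
  fun t x => fderiv ℝ (g t) x (EuclideanSpace.single i 1)

/-- Mixed multi-index derivative `∂_t^{γ₀} D_x^γ` on functions of `(t,x)`. -/
def mderivTX (γ0 : ℕ) (γ : Fin n → ℕ) (g : ℝ → Euc n → ℝ) : ℝ → Euc n → ℝ :=
  ((List.ofFn (fun i : Fin n => fun h : ℝ → Euc n → ℝ => (xD i)^[γ i] h)).foldr (· ∘ ·) id)
    (tD^[γ0] g)

/-- Multi-indices in the variables `(t,x)` of total order at most `m`. -/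
def midxTX (n m : ℕ) : Finset (Fin (m + 1) × (Fin n → Fin (m + 1))) :=
  Finset.univ.filter (fun p => (p.1 : ℕ) + ∑ i, (p.2 i : ℕ) ≤ m)

/-- The `C^m(ℝ × K)` norm in the variables `(t,x)`:
`∑_{|γ₀|+|γ| ≤ m} sup_{t ∈ ℝ, x ∈ K} |∂_t^{γ₀} D_x^γ g(t,x)|`. -/
def CnormTXOn (m : ℕ) (K : Set (Euc n)) (g : ℝ → Euc n → ℝ) : ℝ :=
  ∑ p ∈ midxTX n m, ⨆ t : ℝ, ⨆ x ∈ K, ‖mderivTX (p.1 : ℕ) (fun i => (p.2 i : ℕ)) g t x‖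

/-!
Each `a_j(t, ·, ω)` is an integral of its source term along the backward ray `x + τω`, `τ ≤ 0`.
The half-space `{x·ω < -ρ}` and the cylinder `{|x - (x·ω)ω| > ρ}` are open, miss the ball
`B̄(0,ρ)` carrying `q`, and are mapped into themselves by backward translation along `ω`.
So by induction on `j` the source terms, and hence the `a_j`, vanish on them: the derivatives in
`(∂_t² - Δ_x + q)` preserve vanishing on an open set.
-/

section Geometry

variable {F : Type*} [NormedAddCommGroup F] [InnerProductSpace ℝ F] {ω : F}

lemma inner_add_smul_unit (hω : ‖ω‖ = 1) (x : F) (τ : ℝ) :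
    inner ℝ (x + τ • ω) ω = inner ℝ x ω + τ := by
  rw [inner_add_left, real_inner_smul_left, real_inner_self_eq_norm_sq, hω]
  ring

lemma add_smul_sub_inner_smul_unit (hω : ‖ω‖ = 1) (x : F) (τ : ℝ) :
    (x + τ • ω) - inner ℝ (x + τ • ω) ω • ω = x - inner ℝ x ω • ω := by
  rw [inner_add_smul_unit hω, add_smul]
  abel

lemma norm_sub_inner_smul_unit_le (hω : ‖ω‖ = 1) (y : F) :
    ‖y - inner ℝ y ω • ω‖ ≤ ‖y‖ := by
  have h := (ℝ ∙ ω)ᗮ.norm_starProjection_apply_le y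
  rwa [Submodule.starProjection_orthogonal_val, Submodule.starProjection_unit_singleton ℝ hω,
    real_inner_comm] at h

lemma lt_norm_of_inner_unit_lt_neg (hω : ‖ω‖ = 1) {y : F} {ρ : ℝ} (h : inner ℝ y ω < -ρ) :
    ρ < ‖y‖ := by
  have h' := abs_real_inner_le_norm y ω
  rw [hω, mul_one] at h'
  linarith [neg_abs_le (inner ℝ y ω)]

end Geometry

lemma pd_eqOn_zero {F : Type*} [NormedAddCommGroup F] [NormedSpace ℝ F] {V : Set (Euc n)}
    (hV : IsOpen V) {f : Euc n → F} (hf : Set.EqOn f 0 V) (i : Fin n) :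
    Set.EqOn (pd i f) 0 V := by
  intro y hy
  simp [pd, (Filter.eventuallyEq_of_mem (hV.mem_nhds hy) hf).fderiv_eq]

lemma waveOp_eq_zero_of_isOpen {V : Set (Euc n)} (hV : IsOpen V) (q : ℝ → Euc n → ℝ)
    {a : ℝ → Euc n → Euc n → ℝ} {ω : Euc n} (ha : ∀ t, ∀ y ∈ V, a t y ω = 0)
    (t : ℝ) {y : Euc n} (hy : y ∈ V) :
    waveOp q a t y ω = 0 := by
  have h_time : (fun s => a s y ω) = 0 := funext fun s => ha s y hy
  have h_lap : ∀ i, pd i (pd i (fun z => a t z ω)) y = 0 := fun i =>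
    pd_eqOn_zero hV (pd_eqOn_zero hV (fun z hz => ha t z hz) i) i hy
  simp [waveOp, h_time, h_lap, ha t y hy]

lemma aSeq_eq_zero_of_isOpen {q : ℝ → Euc n → ℝ} {ω : Euc n} {S : Set (Euc n)}
    (hS : IsOpen S) (hray : ∀ y ∈ S, ∀ τ : ℝ, τ ≤ 0 → y + τ • ω ∈ S)
    (hq : ∀ t, ∀ y ∈ S, q t y = 0) (j : ℕ) :
    ∀ t, ∀ y ∈ S, aSeq q j t y ω = 0 := by
  induction j with
  | zero =>
    intro t y hy
    exact mul_eq_zero_of_right _ <| setIntegral_eq_zero_of_forall_eq_zero fun τ hτ =>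
      hq _ _ (hray y hy τ hτ)
  | succ j ih =>
    intro t y hy
    exact mul_eq_zero_of_right _ <| setIntegral_eq_zero_of_forall_eq_zero fun τ hτ =>
      waveOp_eq_zero_of_isOpen hS q ih _ (hray y hy τ hτ)

theorem stmt7_general (n : ℕ) (ρ : ℝ)
    (q : ℝ → Euc n → ℝ)
    (hsupp : ∀ (t : ℝ) (x : Euc n), x ∉ Metric.closedBall (0 : Euc n) ρ → q t x = 0) :
    ∀ (j : ℕ) (t : ℝ) (ω : Metric.sphere (0 : Euc n) 1) (x : Euc n),
      (((inner ℝ x ω.1 : ℝ) < -ρ) → aSeq q j t x ω.1 = 0) ∧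
      ((ρ < ‖x - (inner ℝ x ω.1 : ℝ) • ω.1‖) → aSeq q j t x ω.1 = 0) := by
  intro j t ω x
  have hω : ‖ω.1‖ = 1 := by simp
  have hq : ∀ t y, ρ < ‖y‖ → q t y = 0 := fun t y hy => hsupp t y (by simpa using hy)
  have h_inner : Continuous fun y : Euc n => inner ℝ y ω.1 := by fun_prop
  constructor
  · refine aSeq_eq_zero_of_isOpen (isOpen_lt h_inner continuous_const) ?_
      (fun t y hy => hq t y (lt_norm_of_inner_unit_lt_neg hω hy)) j t x
    intro y (hy : inner ℝ y ω.1 < -ρ) τ (hτ : τ ≤ 0)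
    change inner ℝ (y + τ • ω.1) ω.1 < -ρ
    linarith [inner_add_smul_unit hω y τ]
  · refine aSeq_eq_zero_of_isOpen (isOpen_lt continuous_const (by fun_prop)) ?_
      (fun t y hy => hq t y (hy.trans_le (norm_sub_inner_smul_unit_le hω y))) j t x
    intro y hy τ _
    change ρ < ‖(y + τ • ω.1) - inner ℝ (y + τ • ω.1) ω.1 • ω.1‖
    rwa [add_smul_sub_inner_smul_unit hω]

/-- support property of the amplitudes `a_j`, from [MR1004174]:
`a_j(t,x,ω) = 0` whenever `x·ω < -ρ`, and also whenever `|x - (x·ω)ω| > ρ`. -/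
theorem stmt7 (n : ℕ) (hn : 1 ≤ n) (ρ : ℝ) (hρ : 0 < ρ)
    (q : ℝ → Euc n → ℝ)
    (hq : ContDiff ℝ (⊤ : ℕ∞) (fun p : ℝ × Euc n => q p.1 p.2))
    (hsupp : ∀ (t : ℝ) (x : Euc n), x ∉ Metric.closedBall (0 : Euc n) ρ → q t x = 0)
    (hbdd : ∀ (γ0 : ℕ) (γ : Fin n → ℕ), ∃ B : ℝ, ∀ (t : ℝ) (x : Euc n),
      ‖mderivTX γ0 γ q t x‖ ≤ B) :
    ∀ (j : ℕ) (t : ℝ) (ω : Metric.sphere (0 : Euc n) 1) (x : Euc n),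
      (((inner ℝ x ω.1 : ℝ) < -ρ) → aSeq q j t x ω.1 = 0) ∧
      ((ρ < ‖x - (inner ℝ x ω.1 : ℝ) • ω.1‖) → aSeq q j t x ω.1 = 0) :=
  stmt7_general n ρ q hsupp

end
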